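/- arXiv:2601.09206 — 2 statements merged into one kernel-verified Lean document; each statement's English description precedes it below -/
import Mathlib

section
/- Let K, M be invertible N×N complex matrices, r, s ∈ ℂ^{N×2}, with KM − MK = r·sᵀ and I + M invertible. Then det(I − sᵀ(I+M)⁻¹K⁻¹r) = 1. -/
open Matrix

/-!
By the matrix determinant lemma, `det (A - r sᵀ) = det A * det (1 - sᵀ A⁻¹ r)` for invertible `A`.
Take `A = K (1 + M)`: the Sylvester equation gives `A - r sᵀ = (1 + M) K`, whose determinant equals
`det A`, so `det (1 - sᵀ A⁻¹ r) = 1`.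
-/

namespace Matrix

variable {m n R : Type*} [Fintype m] [DecidableEq m] [Fintype n] [DecidableEq n] [CommRing R]

theorem det_one_sub_mul_inv_mul_eq_one {A : Matrix m m R} (U : Matrix m n R) (V : Matrix n m R)
    (hA : IsUnit A.det) (h : (A - U * V).det = A.det) : (1 - V * A⁻¹ * U).det = 1 := by
  have hlemma := det_add_mul (-U) V hA
  rw [Matrix.neg_mul, ← sub_eq_add_neg, h, Matrix.mul_neg, ← sub_eq_add_neg] at hlemma
  exact hA.mul_eq_left.mp hlemma.symm

theorem det_one_sub_mul_inv_mul_eq_one_of_commutator_eq {A B : Matrix m m R}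
    (U : Matrix m n R) (V : Matrix n m R) (hA : IsUnit A.det) (hB : IsUnit B.det)
    (h : A * B - B * A = U * V) : (1 - V * (A * B)⁻¹ * U).det = 1 := by
  refine det_one_sub_mul_inv_mul_eq_one U V (det_mul A B ▸ hA.mul hB) ?_
  rw [← h, sub_sub_cancel, det_mul_comm]

end Matrix

theorem det_v_eq_one_general {N : ℕ} (K M : Matrix (Fin N) (Fin N) ℂ)
    (r s : Matrix (Fin N) (Fin 2) ℂ)
    (hK : IsUnit K.det) (hIM : IsUnit (1 + M).det)
    (hS : K * M - M * K = r * sᵀ) :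
    ((1 : Matrix (Fin 2) (Fin 2) ℂ) - sᵀ * (1 + M)⁻¹ * K⁻¹ * r).det = 1 := by
  have hcomm : K * (1 + M) - (1 + M) * K = r * sᵀ := by
    rw [← hS]; noncomm_ring
  have hinv : (K * (1 + M))⁻¹ = (1 + M)⁻¹ * K⁻¹ := mul_inv_rev K (1 + M)
  simpa only [hinv, Matrix.mul_assoc] using
    det_one_sub_mul_inv_mul_eq_one_of_commutator_eq r sᵀ hK hIM hcomm

/-- `det(I - sᵀ(I+M)⁻¹K⁻¹r) = 1` under the Sylvester equation `KM - MK = r sᵀ`. -/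
theorem det_v_eq_one {N : ℕ} (K M : Matrix (Fin N) (Fin N) ℂ)
    (r s : Matrix (Fin N) (Fin 2) ℂ)
    (hK : IsUnit K.det) (hM : IsUnit M.det) (hIM : IsUnit (1 + M).det)
    (hS : K * M - M * K = r * sᵀ) :
    ((1 : Matrix (Fin 2) (Fin 2) ℂ) - sᵀ * (1 + M)⁻¹ * K⁻¹ * r).det = 1 :=
  det_v_eq_one_general K M r s hK hIM hS
end

section
/- Let K, L, M be invertible N×N complex matrices with KM − ML = r·sᵀ for r, s ∈ ℂ^{N×2}. Then det(I − sᵀM⁻¹K⁻¹r) = det(L)/det(K). -/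
/-!
The Sylvester equation gives `K M - r c = M L`, so `1 - (K M)⁻¹ r c = (K M)⁻¹ M L`, whose
determinant is `det L / det K`. The Weinstein–Aronszajn identity `det (1 - A B) = det (1 - B A)`
moves this from the `N × N` matrix `1 - M⁻¹ K⁻¹ r c` to the small matrix `1 - c M⁻¹ K⁻¹ r`.
-/

open Matrix

namespace Matrix

variable {n m : Type*} [Fintype n] [DecidableEq n] [Fintype m]

theorem one_sub_inv_mul_inv_mul_mul_of_sylvester {R : Type*} [CommRing R]
    {K L M : Matrix n n R} {r : Matrix n m R} {c : Matrix m n R}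
    (hK : IsUnit K.det) (hM : IsUnit M.det) (hS : K * M - M * L = r * c) :
    1 - M⁻¹ * K⁻¹ * r * c = M⁻¹ * K⁻¹ * (M * L) := by
  have hKM : M⁻¹ * K⁻¹ * (K * M) = 1 := by
    rw [← mul_inv_rev, nonsing_inv_mul _ (by rw [det_mul]; exact hK.mul hM)]
  have hML : M * L = K * M - r * c := by rw [← hS, sub_sub_cancel]
  rw [hML, mul_sub, hKM, Matrix.mul_assoc _ r]

theorem det_one_sub_mul_inv_mul_inv_mul_of_sylvester [DecidableEq m] {𝕜 : Type*} [Field 𝕜]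
    {K L M : Matrix n n 𝕜} {r : Matrix n m 𝕜} {c : Matrix m n 𝕜}
    (hK : IsUnit K.det) (hM : IsUnit M.det) (hS : K * M - M * L = r * c) :
    (1 - c * M⁻¹ * K⁻¹ * r).det = L.det / K.det := by
  have hWA : (1 - c * M⁻¹ * K⁻¹ * r).det = (1 - M⁻¹ * K⁻¹ * r * c).det := by
    rw [Matrix.mul_assoc, Matrix.mul_assoc, ← Matrix.mul_assoc M⁻¹, det_one_sub_mul_comm]
  rw [hWA, one_sub_inv_mul_inv_mul_mul_of_sylvester hK hM hS, det_mul, det_mul, det_mul,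
    det_nonsing_inv, det_nonsing_inv, Ring.inverse_eq_inv']
  field_simp [hK.ne_zero, hM.ne_zero]

end Matrix

theorem det_v_eq_detL_div_detK_general {N : ℕ} (K L M : Matrix (Fin N) (Fin N) ℂ)
    (r s : Matrix (Fin N) (Fin 2) ℂ)
    (hK : IsUnit K.det) (hM : IsUnit M.det)
    (hS : K * M - M * L = r * sᵀ) :
    ((1 : Matrix (Fin 2) (Fin 2) ℂ) - sᵀ * M⁻¹ * K⁻¹ * r).det = L.det / K.det :=
  det_one_sub_mul_inv_mul_inv_mul_of_sylvester hK hM hS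

/-- In the KP-type scheme, `det(I - sᵀ M⁻¹ K⁻¹ r) = det L / det K`. -/
theorem det_v_eq_detL_div_detK {N : ℕ} (K L M : Matrix (Fin N) (Fin N) ℂ)
    (r s : Matrix (Fin N) (Fin 2) ℂ)
    (hK : IsUnit K.det) (hL : IsUnit L.det) (hM : IsUnit M.det)
    (hS : K * M - M * L = r * sᵀ) :
    ((1 : Matrix (Fin 2) (Fin 2) ℂ) - sᵀ * M⁻¹ * K⁻¹ * r).det = L.det / K.det :=
  det_v_eq_detL_div_detK_general K L M r s hK hM hS
end
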